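/- Let λ > 0, let N be a geometric random variable with P(N = n) = (2/3)(1/3)^{n−1} for n ∈ {1,2,…}, and let (B_i)_{i≥1} be i.i.d. Bernoulli random variables with success probability λ/(1+λ), independent of N. Then P(there exists 1 ≤ i ≤ N with B_i = 1) = (3λ/2)/(1 + 3λ/2). -/

import Mathlib

open MeasureTheory ProbabilityTheory

/-! # Statement 7: a geometric number of Bernoulli trials.

Let `λ > 0`, let `N ~ Geo(2/3)` on `{1,2,…}` (`P(N = n) = (2/3)(1/3)^{n−1}`), and let
`(B_i)_{i ≥ 1}` be i.i.d. `Bernoulli(λ/(1+λ))`, independent of `N`.  Then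
`P(∃ 1 ≤ i ≤ N, B_i = 1) = (3λ/2)/(1 + 3λ/2)`.

Mutual independence of `N` and the `B_i` is expressed by `iIndepFun` applied to the family
indexed by `Option ℕ` sending `none` to `N` and `some i` to the `{0,1}`-valued encoding of
`B i` (which generates the same `σ`-algebra as `B i`). -/

/-- If `N ~ Geo(2/3)` on `{1,2,…}` and `(B_i)` are i.i.d.
`Bernoulli(λ/(1+λ))` independent of `N`, then the probability that some `B_i` with
`1 ≤ i ≤ N` equals `1` is `(3λ/2)/(1 + 3λ/2)`. -/
theorem geometric_number_of_bernoullis (lam : ℝ) (hlam : 0 < lam)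
    {Ω : Type*} [MeasurableSpace Ω] (P : Measure Ω) [IsProbabilityMeasure P]
    (N : Ω → ℕ) (B : ℕ → Ω → Bool)
    (hNm : Measurable N) (hBm : ∀ i, Measurable (B i))
    (hIndep : iIndepFun
      (fun o : Option ℕ => Option.elim o N (fun i ω => cond (B i ω) 1 0)) P)
    (hN : ∀ n : ℕ, P {ω | N ω = n + 1} = ENNReal.ofReal ((2 / 3) * (1 / 3 : ℝ) ^ n))
    (hB : ∀ i, P {ω | B i ω = true} = ENNReal.ofReal (lam / (1 + lam))) :
    P {ω | ∃ i, 1 ≤ i ∧ i ≤ N ω ∧ B i ω = true}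
      = ENNReal.ofReal ((3 * lam / 2) / (1 + 3 * lam / 2)) := by
  classical
  have h1lam : (0:ℝ) < 1 + lam := by linarith
  set p : ℝ := lam / (1 + lam) with hpdef
  set q : ℝ := 1 / (1 + lam) with hqdef
  have hq0 : (0:ℝ) ≤ q := by positivity
  have hq1 : q < 1 := by rw [hqdef, div_lt_one h1lam]; linarith
  have hpq : 1 - p = q := by rw [hpdef, hqdef]; field_simp; ring
  have hp0 : (0:ℝ) ≤ p := by positivity
  -- measurability of basic sets
  have hmBt : ∀ i, MeasurableSet {ω | B i ω = true} := fun i =>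
    (hBm i) (measurableSet_singleton true)
  have hmBf : ∀ i, MeasurableSet {ω | B i ω = false} := fun i =>
    (hBm i) (measurableSet_singleton false)
  have hmN : ∀ n : ℕ, MeasurableSet {ω | N ω = n} := fun n =>
    hNm (measurableSet_singleton n)
  set A : Set Ω := {ω | ∃ i, 1 ≤ i ∧ i ≤ N ω ∧ B i ω = true} with hAdef
  have hmA : MeasurableSet A := by
    have : A = ⋃ i, ({ω | 1 ≤ i} ∩ ({ω | i ≤ N ω} ∩ {ω | B i ω = true})) := by
      ext ω; simp [hAdef, Set.mem_iUnion, and_assoc]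
    rw [this]
    exact MeasurableSet.iUnion fun i =>
      (MeasurableSet.const _).inter ((hNm measurableSet_Ici).inter (hmBt i))
  -- the probability that a single coin is false
  have hBf : ∀ i, P {ω | B i ω = false} = ENNReal.ofReal q := by
    intro i
    have hc : {ω | B i ω = false} = {ω | B i ω = true}ᶜ := by
      ext ω; simp
    rw [hc, prob_compl_eq_one_sub (hmBt i), hB i, ← hpq, ENNReal.ofReal_sub 1 hp0,
      ENNReal.ofReal_one]
  -- the "all coins false up to n+1, and N = n+1" event
  set F : ℕ → Set Ω := fun n =>
    {ω | N ω = n + 1} ∩ {ω | ∀ i ∈ Finset.Icc 1 (n+1), B i ω = false} with hFdef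
  have hmF : ∀ n, MeasurableSet (F n) := by
    intro n
    refine (hmN (n+1)).inter ?_
    have : {ω | ∀ i ∈ Finset.Icc 1 (n+1), B i ω = false}
        = ⋂ i ∈ Finset.Icc 1 (n+1), {ω | B i ω = false} := by
      ext ω; simp
    rw [this]
    exact MeasurableSet.biInter (Finset.Icc 1 (n+1)).countable_toSet fun i _ => hmBf i
  have hFP : ∀ n, P (F n) = ENNReal.ofReal ((2/3) * (1/3:ℝ)^n * q^(n+1)) := by
    intro n
    have hnotmem : (none : Option ℕ) ∉ (Finset.Icc 1 (n+1)).image some := by simp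
    have hmul := hIndep.measure_inter_preimage_eq_mul
      (S := insert none ((Finset.Icc 1 (n+1)).image some))
      (sets := fun o => Option.elim o {n+1} (fun _ => ({0} : Set ℕ)))
      (fun o _ => by cases o <;> exact measurableSet_singleton _)
    have hL : (⋂ o ∈ (insert none ((Finset.Icc 1 (n+1)).image some) : Finset (Option ℕ)),
        (fun o : Option ℕ => Option.elim o N (fun i ω => cond (B i ω) 1 0)) o ⁻¹'
          (Option.elim o {n+1} (fun _ => ({0} : Set ℕ)))) = F n := by
      ext ω
      simp only [Set.mem_iInter, Finset.mem_insert, Finset.mem_image, hFdef,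
        Set.mem_inter_iff, Set.mem_setOf_eq, Set.mem_preimage, Set.mem_singleton_iff]
      constructor
      · intro h
        refine ⟨h none (Or.inl rfl), fun i hi => ?_⟩
        have h3 := h (some i) (Or.inr ⟨i, hi, rfl⟩)
        simp only [Option.elim] at h3
        cases hb : B i ω
        · rfl
        · rw [hb] at h3; simp at h3
      · rintro ⟨h1, h2⟩ o ho
        rcases ho with rfl | ⟨i, hi, rfl⟩
        · exact h1
        · simp [Option.elim, h2 i hi]
    have hcard : (Finset.Icc 1 (n+1)).card = n + 1 := by
      rw [Nat.card_Icc]; omega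
    have hone : P ((Option.elim (none : Option ℕ) N fun i ω => cond (B i ω) 1 0) ⁻¹'
        (Option.elim (none : Option ℕ) ({n+1} : Set ℕ) fun _ => ({0} : Set ℕ)))
        = ENNReal.ofReal ((2/3) * (1/3:ℝ)^n) := hN n
    have hR' : ∀ i ∈ Finset.Icc 1 (n+1),
        P ((Option.elim (some i) N fun j ω => cond (B j ω) 1 0) ⁻¹'
          (Option.elim (some i) ({n+1} : Set ℕ) fun _ => ({0} : Set ℕ)))
        = ENNReal.ofReal q := by
      intro i _
      have hset : (Option.elim (some i) N fun j ω => cond (B j ω) 1 0) ⁻¹'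
          (Option.elim (some i) ({n+1} : Set ℕ) fun _ => ({0} : Set ℕ))
          = {ω | B i ω = false} := by
        ext ω
        simp only [Option.elim, Set.mem_preimage, Set.mem_singleton_iff, Set.mem_setOf_eq]
        cases hb : B i ω <;> simp
      rw [hset, hBf i]
    rw [hL] at hmul
    rw [hmul, Finset.prod_insert hnotmem,
      Finset.prod_image (fun a _ b _ h => Option.some.inj h), hone,
      Finset.prod_congr rfl hR', Finset.prod_const, hcard,
      ← ENNReal.ofReal_pow hq0, ← ENNReal.ofReal_mul (by positivity)]
  -- the pieces of A
  set C : ℕ → Set Ω := fun n => {ω | N ω = n + 1} ∩ A with hCdef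
  have hCF : ∀ n, C n = {ω | N ω = n + 1} \ F n := by
    intro n
    ext ω
    constructor
    · rintro ⟨hn, i, h1, h2, h3⟩
      refine ⟨hn, fun hF => ?_⟩
      have hall : ∀ i ∈ Finset.Icc 1 (n+1), B i ω = false := hF.2
      have hn' : N ω = n + 1 := hn
      have := hall i (Finset.mem_Icc.2 ⟨h1, by omega⟩)
      rw [h3] at this
      cases this
    · rintro ⟨hn, hF⟩
      have hn' : N ω = n + 1 := hn
      refine ⟨hn, ?_⟩
      by_contra hcon
      apply hF
      refine ⟨hn, fun i hi => ?_⟩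
      rcases Finset.mem_Icc.1 hi with ⟨hi1, hi2⟩
      cases hb : B i ω
      · rfl
      · exact absurd ⟨i, hi1, by omega, hb⟩ hcon
  have hCP : ∀ n, P (C n) = ENNReal.ofReal ((2/3) * (1/3:ℝ)^n - (2/3) * (1/3:ℝ)^n * q^(n+1)) := by
    intro n
    have hsub : F n ⊆ {ω | N ω = n + 1} := Set.inter_subset_left
    rw [hCF n, measure_diff hsub (hmF n).nullMeasurableSet (measure_ne_top P _),
      hN n, hFP n, ← ENNReal.ofReal_sub _ (by positivity)]
  -- decomposition of A
  have hAun : A = ⋃ n, C n := by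
    ext ω
    simp only [Set.mem_iUnion, hCdef, Set.mem_inter_iff, Set.mem_setOf_eq]
    constructor
    · rintro ⟨i, h1, h2, h3⟩
      have hge : 1 ≤ N ω := le_trans h1 h2
      exact ⟨N ω - 1, by omega, i, h1, h2, h3⟩
    · rintro ⟨n, _, h⟩
      exact h
  have hdisj : Pairwise (Function.onFun Disjoint C) := by
    intro m n hmn
    refine Set.disjoint_left.2 fun ω hm hn => hmn ?_
    have h1 : N ω = m + 1 := hm.1
    have h2 : N ω = n + 1 := hn.1
    omega
  have hPA : P A = ∑' n, P (C n) := by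
    rw [hAun]
    exact measure_iUnion hdisj fun n => (hmN (n+1)).inter hmA
  -- summing the series
  set f : ℕ → ℝ := fun n => (2/3) * (1/3:ℝ)^n - (2/3) * (1/3:ℝ)^n * q^(n+1) with hfdef
  have hf_eq : ∀ n, f n = (2/3) * (1/3:ℝ)^n - ((2/3) * q) * (q/3)^n := by
    intro n
    simp only [hfdef]
    rw [div_eq_mul_inv q, mul_pow, pow_succ]
    ring
  have hf_nonneg : ∀ n, 0 ≤ f n := by
    intro n
    have hqn : q^(n+1) ≤ 1 := pow_le_one₀ hq0 hq1.le
    have h3 : (0:ℝ) ≤ (2/3) * (1/3:ℝ)^n := by positivity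
    simp only [hfdef]
    nlinarith
  have hs1 : Summable (fun n : ℕ => (2/3) * (1/3:ℝ)^n) :=
    (summable_geometric_of_lt_one (by norm_num) (by norm_num)).mul_left _
  have hs2 : Summable (fun n : ℕ => ((2/3) * q) * (q/3:ℝ)^n) :=
    (summable_geometric_of_lt_one (by positivity) (by linarith)).mul_left _
  have hfsummable : Summable f := by
    have := hs1.sub hs2
    refine this.congr fun n => (hf_eq n).symm
  have htsum : ∑' n, f n = (3 * lam / 2) / (1 + 3 * lam / 2) := by
    have h1 : ∑' n, f n = (∑' n : ℕ, (2/3) * (1/3:ℝ)^n) - ∑' n : ℕ, ((2/3) * q) * (q/3:ℝ)^n := by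
      rw [← Summable.tsum_sub hs1 hs2]
      exact tsum_congr hf_eq
    rw [h1, tsum_mul_left, tsum_mul_left,
      tsum_geometric_of_lt_one (by norm_num) (by norm_num),
      tsum_geometric_of_lt_one (by positivity) (by linarith)]
    rw [hqdef]
    have e1 : ((1:ℝ) - 1/3)⁻¹ = 3/2 := by norm_num
    have hne : (2:ℝ) + 3 * lam ≠ 0 := by positivity
    have e2 : ((1:ℝ) - (1/(1+lam))/3)⁻¹ = 3*(1+lam)/(2+3*lam) := by
      rw [show (1:ℝ) - (1/(1+lam))/3 = (2+3*lam)/(3*(1+lam)) by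
        field_simp; ring]
      rw [inv_div]
    rw [e1, e2]
    have h3 : (1:ℝ) + 3 * lam / 2 ≠ 0 := by positivity
    field_simp
    ring
  calc P A = ∑' n, P (C n) := hPA
    _ = ∑' n, ENNReal.ofReal (f n) := tsum_congr fun n => hCP n
    _ = ENNReal.ofReal (∑' n, f n) := (ENNReal.ofReal_tsum_of_nonneg hf_nonneg hfsummable).symm
    _ = ENNReal.ofReal ((3 * lam / 2) / (1 + 3 * lam / 2)) := by rw [htsum]
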